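/- The Westergaard mode-I crack stress field is in equilibrium without body forces: on all of D = ℝ² ∖ {(x,0) : x ≤ 0}, the stress matrix σ defined by the polar formulas satisfies div σ = 0, i.e. ∂σ₁₁/∂x + ∂σ₁₂/∂y = 0 and ∂σ₂₁/∂x + ∂σ₂₂/∂y = 0 at every point of D. (This is the claim in Example 4.4 that the given stress is an exact solution of the equilibrium equation ∇·σ = f with vanishing body force away from the crack.) -/

import Mathlib

open Real

/-- The polar radius `r = √(x² + y²)`. -/
noncomputable def crackR (x y : ℝ) : ℝ := Real.sqrt (x ^ 2 + y ^ 2)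

/-- The polar angle `θ ∈ (−π, π]`, the argument of `x + iy`. -/
noncomputable def crackθ (x y : ℝ) : ℝ := Complex.arg (x + y * Complex.I)

/-- The `(1,1)` entry of the Westergaard mode-I stress field. -/
noncomputable def crackσ11 (K x y : ℝ) : ℝ :=
  K / Real.sqrt (2 * π * crackR x y) *
    (Real.cos (crackθ x y / 2) *
      (1 - Real.sin (crackθ x y / 2) * Real.sin (3 * crackθ x y / 2)))

/-- The `(1,2)` (and `(2,1)`) entry of the Westergaard mode-I stress field. -/
noncomputable def crackσ12 (K x y : ℝ) : ℝ :=
  K / Real.sqrt (2 * π * crackR x y) *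
    (Real.cos (crackθ x y / 2) * Real.sin (crackθ x y / 2) *
      Real.cos (3 * crackθ x y / 2))

/-- The `(2,2)` entry of the Westergaard mode-I stress field. -/
noncomputable def crackσ22 (K x y : ℝ) : ℝ :=
  K / Real.sqrt (2 * π * crackR x y) *
    (Real.cos (crackθ x y / 2) *
      (1 + Real.sin (crackθ x y / 2) * Real.sin (3 * crackθ x y / 2)))

/-- Partial derivative with respect to the first variable. -/
noncomputable def pdx (f : ℝ → ℝ → ℝ) (x y : ℝ) : ℝ := deriv (fun t => f t y) x

/-- Partial derivative with respect to the second variable. -/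
noncomputable def pdy (f : ℝ → ℝ → ℝ) (x y : ℝ) : ℝ := deriv (fun t => f x t) y
/-!
The field is Westergaard's representation `σ₁₁ = Re Z - y Im Z'`, `σ₁₂ = -y Re Z'`,
`σ₂₂ = Re Z + y Im Z'` of the potential `Z(z) = K / √(2πz)`, which is holomorphic on the slit
plane `D` (principal branch of `z ^ (-1/2)`). For any holomorphic `Z` such a field is
divergence-free: by the Cauchy–Riemann equations `∂ₓ Re Z = Re Z'` and `∂ᵧ Re Z' = -Im Z''`,
and the terms cancel in pairs. The polar formulas are recovered from
`z ^ (-1/2) = r ^ (-1/2) e^(-iθ/2)`, `z ^ (-3/2) = r ^ (-3/2) e^(-3iθ/2)` and `y = r sin θ`.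
-/

open Complex (I slitPlane arg)

section Westergaard

variable {g : ℝ → ℂ} {g' : ℂ} {t : ℝ}

theorem HasDerivAt.re (h : HasDerivAt g g' t) : HasDerivAt (fun s => (g s).re) g'.re t :=
  Complex.reCLM.hasFDerivAt.comp_hasDerivAt t h

theorem HasDerivAt.im (h : HasDerivAt g g' t) : HasDerivAt (fun s => (g s).im) g'.im t :=
  Complex.imCLM.hasFDerivAt.comp_hasDerivAt t h

variable {f : ℂ → ℂ} {f' : ℂ} {x y : ℝ}

theorem HasDerivAt.comp_ofReal_add_mul_I (h : HasDerivAt f f' (x + y * I)) :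
    HasDerivAt (fun t : ℝ => f (t + y * I)) f' x :=
  (h.comp_add_const (x : ℂ) (y * I)).comp_ofReal

theorem HasDerivAt.comp_add_ofReal_mul_I (h : HasDerivAt f f' (x + y * I)) :
    HasDerivAt (fun t : ℝ => f (x + t * I)) (f' * I) y := by
  have hline : HasDerivAt (fun z : ℂ => x + z * I) I y := by
    simpa using ((hasDerivAt_id (y : ℂ)).mul_const I).const_add (x : ℂ)
  exact (h.comp (y : ℂ) hline).comp_ofReal

def westergaardσ11 (Z Z' : ℂ → ℂ) (x y : ℝ) : ℝ :=
  (Z (x + y * I)).re - y * (Z' (x + y * I)).im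

def westergaardσ12 (Z' : ℂ → ℂ) (x y : ℝ) : ℝ := -(y * (Z' (x + y * I)).re)

def westergaardσ22 (Z Z' : ℂ → ℂ) (x y : ℝ) : ℝ :=
  (Z (x + y * I)).re + y * (Z' (x + y * I)).im

theorem westergaard_divergence_free {Z Z' : ℂ → ℂ}
    (hZ : HasDerivAt Z (Z' (x + y * I)) (x + y * I)) (hZ' : DifferentiableAt ℂ Z' (x + y * I)) :
    pdx (westergaardσ11 Z Z') x y + pdy (westergaardσ12 Z') x y = 0 ∧
      pdx (westergaardσ12 Z') x y + pdy (westergaardσ22 Z Z') x y = 0 := by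
  set a := Z' (x + y * I)
  set b := deriv Z' (x + y * I)
  have hZ'' := hZ'.hasDerivAt
  have h11x : HasDerivAt (fun t : ℝ => westergaardσ11 Z Z' t y) (a.re - y * b.im) x :=
    hZ.comp_ofReal_add_mul_I.re.sub (hZ''.comp_ofReal_add_mul_I.im.const_mul y)
  have h12x : HasDerivAt (fun t : ℝ => westergaardσ12 Z' t y) (-(y * b.re)) x :=
    (hZ''.comp_ofReal_add_mul_I.re.const_mul y).neg
  have h12y : HasDerivAt (fun t : ℝ => westergaardσ12 Z' x t) (-(1 * a.re + y * (b * I).re)) y :=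
    ((hasDerivAt_id y).mul hZ''.comp_add_ofReal_mul_I.re).neg
  have h22y : HasDerivAt (fun t : ℝ => westergaardσ22 Z Z' x t)
      ((a * I).re + (1 * a.im + y * (b * I).im)) y :=
    hZ.comp_add_ofReal_mul_I.re.add ((hasDerivAt_id y).mul hZ''.comp_add_ofReal_mul_I.im)
  rw [pdx, pdy, pdx, pdy, h11x.deriv, h12x.deriv, h12y.deriv, h22y.deriv]
  simp only [Complex.mul_re, Complex.mul_im, Complex.I_re, Complex.I_im]
  constructor <;> ring

end Westergaard

theorem im_add_mul_I (x y : ℝ) : ((x : ℂ) + y * I).im = y := by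
  simp only [Complex.add_im, Complex.ofReal_im, Complex.mul_I_im, Complex.ofReal_re, zero_add]

theorem add_mul_I_mem_slitPlane {x y : ℝ} : (x + y * I : ℂ) ∈ slitPlane ↔ ¬(y = 0 ∧ x ≤ 0) := by
  rw [Complex.mem_slitPlane_iff, Complex.add_re, Complex.ofReal_re, Complex.mul_I_re,
    Complex.ofReal_im, neg_zero, add_zero, im_add_mul_I, not_and_or, not_le]
  exact or_comm

theorem div_sqrt_mul_eq_div_sqrt_mul_rpow (K : ℝ) {a r : ℝ} (ha : 0 ≤ a) (hr : 0 ≤ r) :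
    K / √(a * r) = K / √a * r ^ (-1 / 2 : ℝ) := by
  rw [Real.sqrt_mul ha, neg_div, Real.rpow_neg hr, ← Real.sqrt_eq_rpow, ← div_div,
    div_eq_mul_inv (K / √a)]

theorem im_mul_rpow_neg_three_halves (z : ℂ) :
    z.im * ‖z‖ ^ (-3 / 2 : ℝ) = 2 * ‖z‖ ^ (-1 / 2 : ℝ) * sin (arg z / 2) * cos (arg z / 2) := by
  have hr : ‖z‖ * ‖z‖ ^ (-3 / 2 : ℝ) = ‖z‖ ^ (-1 / 2 : ℝ) := by
    rw [← Real.rpow_one_add' (norm_nonneg z) (by norm_num)]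
    norm_num
  rw [← Complex.norm_mul_sin_arg, ← mul_div_cancel₀ (arg z) two_ne_zero, sin_two_mul,
    mul_div_cancel_left₀ _ two_ne_zero]
  linear_combination (2 * sin (arg z / 2) * cos (arg z / 2)) * hr

section CrackPotential

variable (K : ℝ)

noncomputable def crackPotential (z : ℂ) : ℂ :=
  ((K / √(2 * π) : ℝ) : ℂ) * z ^ ((-1 / 2 : ℝ) : ℂ)

noncomputable def crackPotentialDeriv (z : ℂ) : ℂ :=
  ((-(K / √(2 * π)) / 2 : ℝ) : ℂ) * z ^ ((-3 / 2 : ℝ) : ℂ)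

theorem hasDerivAt_crackPotential {z : ℂ} (hz : z ∈ slitPlane) :
    HasDerivAt (crackPotential K) (crackPotentialDeriv K z) z := by
  have hexp : ((-1 / 2 : ℝ) : ℂ) - 1 = ((-3 / 2 : ℝ) : ℂ) := by push_cast; ring
  have h := (Complex.hasStrictDerivAt_cpow_const (c := ((-1 / 2 : ℝ) : ℂ)) hz).hasDerivAt.const_mul
    ((K / √(2 * π) : ℝ) : ℂ)
  rw [hexp] at h
  refine h.congr_deriv ?_
  rw [crackPotentialDeriv]
  push_cast
  ring

theorem differentiableAt_crackPotentialDeriv {z : ℂ} (hz : z ∈ slitPlane) :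
    DifferentiableAt ℂ (crackPotentialDeriv K) z :=
  (Complex.hasStrictDerivAt_cpow_const hz).hasDerivAt.differentiableAt.const_mul _

variable (z : ℂ)

theorem crackPotential_re :
    (crackPotential K z).re = K / √(2 * π * ‖z‖) * cos (arg z / 2) := by
  rw [crackPotential, Complex.re_ofReal_mul, Complex.cpow_ofReal_re,
    div_sqrt_mul_eq_div_sqrt_mul_rpow K (by positivity) (norm_nonneg z), mul_assoc, ← cos_neg]
  ring_nf

theorem im_mul_crackPotentialDeriv_re : z.im * (crackPotentialDeriv K z).re =
    -(K / √(2 * π * ‖z‖) * (cos (arg z / 2) * sin (arg z / 2) * cos (3 * arg z / 2))) := by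
  have hcos : cos (arg z * (-3 / 2)) = cos (3 * arg z / 2) := by rw [← cos_neg]; ring_nf
  rw [crackPotentialDeriv, Complex.re_ofReal_mul, Complex.cpow_ofReal_re, hcos,
    div_sqrt_mul_eq_div_sqrt_mul_rpow K (by positivity) (norm_nonneg z), mul_left_comm,
    ← mul_assoc z.im, im_mul_rpow_neg_three_halves]
  ring

theorem im_mul_crackPotentialDeriv_im : z.im * (crackPotentialDeriv K z).im =
    K / √(2 * π * ‖z‖) * (cos (arg z / 2) * sin (arg z / 2) * sin (3 * arg z / 2)) := by
  have hsin : sin (arg z * (-3 / 2)) = -sin (3 * arg z / 2) := by rw [← sin_neg]; ring_nf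
  rw [crackPotentialDeriv, Complex.im_ofReal_mul, Complex.cpow_ofReal_im, hsin,
    div_sqrt_mul_eq_div_sqrt_mul_rpow K (by positivity) (norm_nonneg z), mul_left_comm,
    ← mul_assoc z.im, im_mul_rpow_neg_three_halves]
  ring

end CrackPotential

/- These identities hold on all of `ℝ²`: at the origin both sides vanish, since `0 ^ (-1/2) = 0`
for `Real.rpow` and `Complex.cpow` and `K / √0 = 0`. So the partial derivatives need no
localisation to `D`. -/
section CrackStress

variable (K : ℝ)

theorem crackσ11_eq_westergaardσ11 :
    crackσ11 K = westergaardσ11 (crackPotential K) (crackPotentialDeriv K) := by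
  ext x y
  have him := im_mul_crackPotentialDeriv_im K (x + y * I)
  rw [im_add_mul_I] at him
  rw [westergaardσ11, crackPotential_re, him, Complex.norm_add_mul_I, crackσ11, crackR, crackθ]
  ring

theorem crackσ12_eq_westergaardσ12 : crackσ12 K = westergaardσ12 (crackPotentialDeriv K) := by
  ext x y
  have hre := im_mul_crackPotentialDeriv_re K (x + y * I)
  rw [im_add_mul_I] at hre
  rw [westergaardσ12, hre, Complex.norm_add_mul_I, crackσ12, crackR, crackθ]
  ring

theorem crackσ22_eq_westergaardσ22 :
    crackσ22 K = westergaardσ22 (crackPotential K) (crackPotentialDeriv K) := by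
  ext x y
  have him := im_mul_crackPotentialDeriv_im K (x + y * I)
  rw [im_add_mul_I] at him
  rw [westergaardσ22, crackPotential_re, him, Complex.norm_add_mul_I, crackσ22, crackR, crackθ]
  ring

end CrackStress

theorem crack_stress_divergence_free_general (K : ℝ) (x y : ℝ)
    (hD : ¬(y = 0 ∧ x ≤ 0)) :
    pdx (crackσ11 K) x y + pdy (crackσ12 K) x y = 0 ∧
      pdx (crackσ12 K) x y + pdy (crackσ22 K) x y = 0 := by
  have hz := add_mul_I_mem_slitPlane.mpr hD
  rw [crackσ11_eq_westergaardσ11, crackσ12_eq_westergaardσ12, crackσ22_eq_westergaardσ22]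
  exact westergaard_divergence_free (hasDerivAt_crackPotential K hz)
    (differentiableAt_crackPotentialDeriv K hz)

/-- The Westergaard mode-I stress field is divergence-free (equilibrium without body
forces) on the slit plane `D = ℝ² ∖ {(x,0) : x ≤ 0}`. -/
theorem crack_stress_divergence_free (K : ℝ) (hK : 0 < K) (x y : ℝ)
    (hD : ¬(y = 0 ∧ x ≤ 0)) :
    pdx (crackσ11 K) x y + pdy (crackσ12 K) x y = 0 ∧
      pdx (crackσ12 K) x y + pdy (crackσ22 K) x y = 0 :=
  crack_stress_divergence_free_general K x y hD
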